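/- Let θ be a hierarchical sequence of partitions in [s,t]. Then the simplicial complex K^{s,t} built as the union of the solid simplices of all clusters of θ(r) for r ∈ [s,t] has trivial first homology: H₁(K^{s,t}) = 0. -/

import Mathlib

/-! Since θ is monotone for refinement, one partition π of the window is coarser than all the
others, so every edge and triangle of `K^{s,t}` lies in a cluster of π: `K^{s,t}` is the disjoint
union of the solid simplices on the clusters of π. A 1-cycle on such a union is a boundary: fix an
apex in each cluster; the cone over the cycle from the apices is a 2-chain with that boundary. -/

open scoped Classical

/-- A partition of a type `X` into nonempty clusters, represented as a finite
set of finite clusters such that every element lies in exactly one cluster. -/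
structure Partn (X : Type*) where
  parts : Finset (Finset X)
  nonempty : ∀ C ∈ parts, C.Nonempty
  existsUnique : ∀ x : X, ∃! C, C ∈ parts ∧ x ∈ C

namespace Partn

variable {X : Type*}

/-- `x` and `y` lie in a common cluster of `π`. -/
def rel (π : Partn X) (x y : X) : Prop := ∃ C ∈ π.parts, x ∈ C ∧ y ∈ C

/-- Refinement order: every cluster of `π` is contained in a cluster of `π'`. -/
def le (π π' : Partn X) : Prop := ∀ C ∈ π.parts, ∃ C' ∈ π'.parts, C ⊆ C'

end Partn

section Cone

variable {X M : Type*} [DecidableEq X] [AddCommGroup M]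

/-- The term of the cone over `f` with apex `a`: the triangle `(a, c, d)` gets the weight of the
edge `(c, d)` when `a` is the apex of the cluster of `c`. -/
def coneTerm (p : X → X) (f : X → X → M) (a c d : X) : M :=
  if a = p c then f c d else 0

def cone (p : X → X) (f : X → X → M) (x y z : X) : M :=
  coneTerm p f x y z + coneTerm p f y z x + coneTerm p f z x y

variable {p : X → X} {f : X → X → M}

theorem coneTerm_swap (hanti : ∀ x y, f x y = -f y x)
    (hp : ∀ x y, f x y ≠ 0 → p x = p y) (a c d : X) :
    coneTerm p f a c d = -coneTerm p f a d c := by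
  by_cases hcd : f c d = 0
  · simp [coneTerm, hcd, hanti d c]
  · simp only [coneTerm, hp c d hcd, hanti c d]
    split_ifs <;> simp

theorem cone_swap_left (hanti : ∀ x y, f x y = -f y x)
    (hp : ∀ x y, f x y ≠ 0 → p x = p y) (x y z : X) :
    cone p f x y z = -cone p f y x z := by
  simp only [cone, coneTerm_swap hanti hp y x z, coneTerm_swap hanti hp x z y,
    coneTerm_swap hanti hp z y x]
  abel

theorem cone_swap_right (hanti : ∀ x y, f x y = -f y x)
    (hp : ∀ x y, f x y ≠ 0 → p x = p y) (x y z : X) :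
    cone p f x y z = -cone p f x z y := by
  simp only [cone, coneTerm_swap hanti hp x z y, coneTerm_swap hanti hp z y x,
    coneTerm_swap hanti hp y x z]
  abel

theorem apex_eq_of_coneTerm_ne_zero (hpp : ∀ x, p (p x) = p x)
    (hp : ∀ x y, f x y ≠ 0 → p x = p y) {a c d : X} (h : coneTerm p f a c d ≠ 0) :
    p a = p c ∧ p c = p d := by
  by_cases hac : a = p c
  · simp only [coneTerm, hac, if_true] at h
    exact ⟨hac ▸ hpp c, hp c d h⟩
  · simp [coneTerm, hac] at h

theorem apex_eq_of_cone_ne_zero (hpp : ∀ x, p (p x) = p x)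
    (hp : ∀ x y, f x y ≠ 0 → p x = p y) {x y z : X} (h : cone p f x y z ≠ 0) :
    p x = p y ∧ p y = p z := by
  have key : coneTerm p f x y z ≠ 0 ∨ coneTerm p f y z x ≠ 0 ∨ coneTerm p f z x y ≠ 0 := by
    by_contra! h0
    exact h (by simp [cone, h0])
  rcases key with h₁ | h₂ | h₃
  · exact apex_eq_of_coneTerm_ne_zero hpp hp h₁
  · obtain ⟨hyz, hzx⟩ := apex_eq_of_coneTerm_ne_zero hpp hp h₂
    exact ⟨hzx.symm.trans hyz.symm, hyz⟩
  · obtain ⟨hzx, hxy⟩ := apex_eq_of_coneTerm_ne_zero hpp hp h₃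
    exact ⟨hxy, hxy.symm.trans hzx.symm⟩

theorem sum_cone [Fintype X] (hanti : ∀ x y, f x y = -f y x) (hp : ∀ x y, f x y ≠ 0 → p x = p y)
    (hcyc : ∀ x, ∑ y, f x y = 0) (x y : X) :
    ∑ z, cone p f x y z = f x y := by
  have from_apex : ∑ z, coneTerm p f x y z = 0 := by
    simp only [coneTerm]
    split_ifs <;> simp [hcyc y]
  -- `p z = p x` on every edge `(z, x)` of `f`, so the apex test depends only on `x`.
  have through_apex : ∑ z, coneTerm p f y z x = 0 := by
    have hterm : ∀ z, coneTerm p f y z x = if y = p x then f z x else 0 := by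
      intro z
      by_cases hzx : f z x = 0
      · simp [coneTerm, hzx]
      · simp only [coneTerm, hp z x hzx]
    simp only [hterm]
    split_ifs
    · simp [hanti _ x, hcyc x]
    · simp
  have to_apex : ∑ z, coneTerm p f z x y = f x y := by
    simp [coneTerm]
  simp only [cone, Finset.sum_add_distrib, from_apex, through_apex, to_apex, zero_add]

end Cone

/-- `H₁` of the disjoint union of the solid simplices on the classes of `s` vanishes. -/
theorem exists_boundary_of_cycle_on_classes {X M : Type*} [Fintype X] [AddCommGroup M]
    (s : Setoid X) {f : X → X → M} (hanti : ∀ x y, f x y = -f y x)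
    (hsupp : ∀ x y, f x y ≠ 0 → s x y) (hcyc : ∀ x, ∑ y, f x y = 0) :
    ∃ g : X → X → X → M,
      (∀ x y z, g x y z = -g y x z) ∧ (∀ x y z, g x y z = -g x z y) ∧
      (∀ x y z, g x y z ≠ 0 → s x y ∧ s y z) ∧ ∀ x y, f x y = ∑ z, g x y z := by
  classical
  let apex : X → X := fun x => (Quotient.mk s x).out
  have apex_eq_iff : ∀ x y, apex x = apex y ↔ s x y := fun x y =>
    ⟨fun h => Quotient.exact (by simpa [apex] using congrArg (Quotient.mk s) h),
      fun h => congrArg Quotient.out (Quotient.sound h)⟩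
  have hpp : ∀ x, apex (apex x) = apex x := fun x =>
    (apex_eq_iff _ _).2 (Quotient.mk_out x)
  have hp : ∀ x y, f x y ≠ 0 → apex x = apex y := fun x y h => (apex_eq_iff x y).2 (hsupp x y h)
  refine ⟨cone apex f, cone_swap_left hanti hp, cone_swap_right hanti hp, fun x y z h => ?_,
    fun x y => (sum_cone hanti hp hcyc x y).symm⟩
  obtain ⟨hxy, hyz⟩ := apex_eq_of_cone_ne_zero hpp hp h
  exact ⟨(apex_eq_iff x y).1 hxy, (apex_eq_iff y z).1 hyz⟩

namespace Partn

variable {X : Type*}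

theorem eq_of_mem_of_mem {π : Partn X} {x : X} {C C' : Finset X} (hC : C ∈ π.parts) (hxC : x ∈ C)
    (hC' : C' ∈ π.parts) (hxC' : x ∈ C') : C = C' :=
  (π.existsUnique x).unique ⟨hC, hxC⟩ ⟨hC', hxC'⟩

theorem rel_equivalence (π : Partn X) : Equivalence π.rel where
  refl x := by
    obtain ⟨C, ⟨hC, hxC⟩, -⟩ := π.existsUnique x
    exact ⟨C, hC, hxC, hxC⟩
  symm := fun ⟨C, hC, hx, hy⟩ => ⟨C, hC, hy, hx⟩
  trans := fun ⟨C, hC, hx, hy⟩ ⟨C', hC', hy', hz⟩ =>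
    ⟨C, hC, hx, eq_of_mem_of_mem hC' hy' hC hy ▸ hz⟩

def setoid (π : Partn X) : Setoid X := ⟨π.rel, π.rel_equivalence⟩

theorem rel_of_le {π π' : Partn X} (h : π.le π') {x y : X} (hxy : π.rel x y) : π'.rel x y := by
  obtain ⟨C, hC, hx, hy⟩ := hxy
  obtain ⟨C', hC', hCC'⟩ := h C hC
  exact ⟨C', hC', hCC' hx, hCC' hy⟩

theorem exists_mem_of_rel_of_rel {π : Partn X} {x y z : X} (hxy : π.rel x y) (hyz : π.rel y z) :
    ∃ C ∈ π.parts, x ∈ C ∧ y ∈ C ∧ z ∈ C := by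
  obtain ⟨C, hC, hx, hy⟩ := hxy
  obtain ⟨C', hC', hy', hz⟩ := hyz
  exact ⟨C, hC, hx, hy, eq_of_mem_of_mem hC' hy' hC hy ▸ hz⟩

end Partn

theorem exists_coarsest_of_hierarchical {X ι : Type*} [LinearOrder ι] {θ : ι → Partn X} {s t : ι}
    (hst : s ≤ t)
    (hhier : (∀ r₁ ∈ Set.Icc s t, ∀ r₂ ∈ Set.Icc s t, r₁ ≤ r₂ → Partn.le (θ r₁) (θ r₂)) ∨
      (∀ r₁ ∈ Set.Icc s t, ∀ r₂ ∈ Set.Icc s t, r₁ ≤ r₂ → Partn.le (θ r₂) (θ r₁))) :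
    ∃ r₀ ∈ Set.Icc s t, ∀ r ∈ Set.Icc s t, (θ r).le (θ r₀) := by
  rcases hhier with h | h
  · exact ⟨t, ⟨hst, le_rfl⟩, fun r hr => h r hr t ⟨hst, le_rfl⟩ hr.2⟩
  · exact ⟨s, ⟨le_rfl, hst⟩, fun r hr => h s ⟨le_rfl, hst⟩ r hr hr.1⟩

/-- if θ is hierarchical in [s,t], then the complex K^{s,t}
(union of the solid simplices of all clusters in the window) has trivial
first homology with rational coefficients: every 1-cycle (encoded as an
antisymmetric function supported on edges of K with vanishing boundary) is the
boundary of a 2-chain (an alternating function supported on triangles of K). -/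
theorem hierarchical_H1_trivial
    {X ι : Type*} [Fintype X] [LinearOrder ι]
    (θ : ι → Partn X) (s t : ι)
    (hhier : (∀ r₁ ∈ Set.Icc s t, ∀ r₂ ∈ Set.Icc s t, r₁ ≤ r₂ →
          Partn.le (θ r₁) (θ r₂)) ∨
        (∀ r₁ ∈ Set.Icc s t, ∀ r₂ ∈ Set.Icc s t, r₁ ≤ r₂ →
          Partn.le (θ r₂) (θ r₁))) :
    ∀ f : X → X → ℚ,
      (∀ x y, f x y = - f y x) →
      (∀ x y, f x y ≠ 0 → ∃ r ∈ Set.Icc s t, ∃ C ∈ (θ r).parts,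
        x ∈ C ∧ y ∈ C) →
      (∀ x, ∑ y, f x y = 0) →
      ∃ g : X → X → X → ℚ,
        (∀ x y z, g x y z = - g y x z) ∧
        (∀ x y z, g x y z = - g x z y) ∧
        (∀ x y z, g x y z ≠ 0 → ∃ r ∈ Set.Icc s t, ∃ C ∈ (θ r).parts,
          x ∈ C ∧ y ∈ C ∧ z ∈ C) ∧
        (∀ x y, f x y = ∑ z, g x y z) := by
  intro f hanti hsupp hcyc
  rcases le_or_gt s t with hst | hts
  · obtain ⟨r₀, hr₀, hcoarsest⟩ := exists_coarsest_of_hierarchical hst hhier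
    have hsupp₀ : ∀ x y, f x y ≠ 0 → (θ r₀).setoid x y := fun x y hxy => by
      obtain ⟨r, hr, hrel⟩ := hsupp x y hxy
      exact Partn.rel_of_le (hcoarsest r hr) hrel
    obtain ⟨g, hg₁₂, hg₂₃, hgsupp, hbd⟩ := exists_boundary_of_cycle_on_classes _ hanti hsupp₀ hcyc
    refine ⟨g, hg₁₂, hg₂₃, fun x y z hxyz => ?_, hbd⟩
    obtain ⟨hxy, hyz⟩ := hgsupp x y z hxyz
    exact ⟨r₀, hr₀, Partn.exists_mem_of_rel_of_rel hxy hyz⟩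
  · have hf : ∀ x y, f x y = 0 := fun x y => by
      by_contra hxy
      obtain ⟨r, hr, -⟩ := hsupp x y hxy
      exact (hr.1.trans hr.2).not_gt hts
    exact ⟨0, by simp, by simp, by simp, by simp [hf]⟩
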